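/- If E is an idempotent local biretraction of a commutative Hopf algebroid H over A (E ∗ E = E), then E(1_H) = e^E, i.e. the associated idempotent of E equals E(1_H), and E∘t restricted to A·E(1_H) is the identity-like bijection satisfying E∘t∘E∘t = E∘t. -/

import Mathlib

open TensorProduct

/-- The unital ideal `A·e` generated by an element `e` of a commutative ring. -/
def idealOf {A : Type*} [CommRing A] (e : A) : Set A := Set.range (fun a => a * e)

/-- A commutative Hopf algebroid over a commutative base algebra `A`:
a commutative algebra `H` with source and target maps `s, t : A → H`,
comultiplication `Δ`, counit `ε` and antipode `S` satisfying the standard axioms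
(`S∘t = s`, `S∘s = t`, `S(h₍₁₎)h₍₂₎ = s(ε h)`, `h₍₁₎S(h₍₂₎) = t(ε h)`, etc.). -/
structure CommHopfAlgebroid (k A H : Type*) [CommRing k] [CommRing A] [CommRing H]
    [Algebra k A] [Algebra k H] where
  s : A →ₐ[k] H
  t : A →ₐ[k] H
  comul : H →ₐ[k] H ⊗[k] H
  counit : H →ₐ[k] A
  antipode : H →ₐ[k] H
  coassoc :
    (TensorProduct.assoc k H H H).toLinearMap ∘ₗ
      (TensorProduct.map comul.toLinearMap LinearMap.id) ∘ₗ comul.toLinearMap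
    = (TensorProduct.map LinearMap.id comul.toLinearMap) ∘ₗ comul.toLinearMap
  counit_left : (LinearMap.mul' k H) ∘ₗ
      (TensorProduct.map (t.toLinearMap ∘ₗ counit.toLinearMap) LinearMap.id) ∘ₗ
        comul.toLinearMap = LinearMap.id
  counit_right : (LinearMap.mul' k H) ∘ₗ
      (TensorProduct.map LinearMap.id (s.toLinearMap ∘ₗ counit.toLinearMap)) ∘ₗ
        comul.toLinearMap = LinearMap.id
  counit_s : ∀ a : A, counit (s a) = a
  counit_t : ∀ a : A, counit (t a) = a
  antipode_s : ∀ a : A, antipode (s a) = t a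
  antipode_t : ∀ a : A, antipode (t a) = s a
  comul_t : ∀ a : A, comul (t a) = t a ⊗ₜ[k] 1
  comul_s : ∀ a : A, comul (s a) = 1 ⊗ₜ[k] s a
  antipode_left : (LinearMap.mul' k H) ∘ₗ
      (TensorProduct.map antipode.toLinearMap LinearMap.id) ∘ₗ comul.toLinearMap
    = s.toLinearMap ∘ₗ counit.toLinearMap
  antipode_right : (LinearMap.mul' k H) ∘ₗ
      (TensorProduct.map LinearMap.id antipode.toLinearMap) ∘ₗ comul.toLinearMap
    = t.toLinearMap ∘ₗ counit.toLinearMap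

variable {k A H : Type*} [CommRing k] [CommRing A] [CommRing H] [Algebra k A] [Algebra k H]

/-- The convolution product of right `A`-linear maps `H → A`:
`(α ∗ β)(h) = β(t(α(h₍₁₎)) · h₍₂₎) = β(t(α(h₍₁₎))) · β(h₍₂₎)`. -/
noncomputable def brtConv (D : CommHopfAlgebroid k A H) (α β : H →ₗ[k] A) : H →ₗ[k] A :=
  β ∘ₗ (LinearMap.mul' k H) ∘ₗ
    (TensorProduct.map (D.t.toLinearMap ∘ₗ α) LinearMap.id) ∘ₗ D.comul.toLinearMap

/-- `e` is a witness for axiom (BRT2) of a local biretraction `α`: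
`α(t(e)) = α(1)` and `α∘t` restricts to a bijection `A·e → A·α(1)`. -/
def IsBrtWitness (D : CommHopfAlgebroid k A H) (α : H →ₗ[k] A) (e : A) : Prop :=
  α (D.t e) = α 1 ∧ Set.BijOn (fun a => α (D.t a)) (idealOf e) (idealOf (α 1))

/-- A local biretraction of a commutative Hopf algebroid: a linear multiplicative
map `α : H → A` satisfying (BRT1) `α(s(a)) = a·α(1)` and (BRT2). -/
def IsBiretraction (D : CommHopfAlgebroid k A H) (α : H →ₗ[k] A) : Prop :=
  (∀ x y : H, α (x * y) = α x * α y) ∧ (∀ a : A, α (D.s a) = a * α 1) ∧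
    ∃ e : A, IsBrtWitness D α e

/-!
Since `Δ(t a) = t a ⊗ 1`, idempotency `E ∗ E = E` evaluated at `t a` says exactly that
`E∘t` is a projection. The (BRT2)-witness `e` is then pinned down:
`E(t(E 1)) = E 1` makes `e` and `E 1 · e` indistinguishable under the injective map `E∘t`
on `A·e`, so `e ∈ A·E(1)`; there `E∘t` fixes `e`, while `E(t e) = E 1`.
-/

theorem brtConv_apply_t (D : CommHopfAlgebroid k A H) (α β : H →ₗ[k] A) (a : A) :
    brtConv D α β (D.t a) = β (D.t (α (D.t a))) := by
  simp [brtConv, D.comul_t]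

theorem self_mem_idealOf {R : Type*} [CommRing R] (e : R) : e ∈ idealOf e :=
  ⟨1, one_mul e⟩

theorem mul_mem_idealOf {R : Type*} [CommRing R] (a e : R) : a * e ∈ idealOf e :=
  ⟨a, rfl⟩

namespace IsBrtWitness

variable {D : CommHopfAlgebroid k A H} {α : H →ₗ[k] A} {e : A}

theorem mem_idealOf_apply_one (he : IsBrtWitness D α e)
    (hmul : ∀ x y : H, α (x * y) = α x * α y)
    (hproj : ∀ a : A, α (D.t (α (D.t a))) = α (D.t a)) :
    e ∈ idealOf (α 1) := by
  have hidem : α 1 * α 1 = α 1 := by rw [← hmul, mul_one]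
  have hfix_one : α (D.t (α 1)) = α 1 := by rw [← he.1, hproj]
  have hsame : α (D.t e) = α (D.t (α 1 * e)) := by
    rw [map_mul, hmul, hfix_one, he.1, hidem]
  have he_eq : e = α 1 * e :=
    he.2.injOn (self_mem_idealOf e) (mul_mem_idealOf (α 1) e) hsame
  exact ⟨e, (mul_comm e (α 1)).trans he_eq.symm⟩

theorem eq_apply_one (he : IsBrtWitness D α e)
    (hmul : ∀ x y : H, α (x * y) = α x * α y)
    (hproj : ∀ a : A, α (D.t (α (D.t a))) = α (D.t a)) :
    e = α 1 := by
  obtain ⟨b, -, hb : α (D.t b) = e⟩ := he.2.surjOn (he.mem_idealOf_apply_one hmul hproj)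
  calc e = α (D.t (α (D.t b))) := by rw [hproj b, hb]
    _ = α 1 := by rw [hb, he.1]

end IsBrtWitness

/-- **Idempotent biretractions.** If `E` is an idempotent local biretraction
(`E ∗ E = E`) of a commutative Hopf algebroid `H` over `A`, with (BRT2)-witness
`e^E`, then `e^E = E(1)`, `E∘t∘E∘t = E∘t`, and `E∘t` restricts to a bijection of
the ideal `A·E(1)` onto itself. -/
theorem idempotent_biretraction (D : CommHopfAlgebroid k A H)
    (E : H →ₗ[k] A) (hE : IsBiretraction D E) (hEE : brtConv D E E = E)
    (e : A) (he : IsBrtWitness D E e) :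
    e = E 1 ∧
    (∀ a : A, E (D.t (E (D.t a))) = E (D.t a)) ∧
    Set.BijOn (fun a => E (D.t a)) (idealOf (E 1)) (idealOf (E 1)) := by
  have hproj : ∀ a : A, E (D.t (E (D.t a))) = E (D.t a) := fun a => by
    rw [← brtConv_apply_t, hEE]
  have he_eq : e = E 1 := he.eq_apply_one hE.1 hproj
  exact ⟨he_eq, hproj, he_eq ▸ he.2⟩
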